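/- Let P be a multivariate polynomial over ℂ in variables indexed by the entries of a 2 × 2 matrix, and suppose P is invariant under left and right multiplication by SL₂(ℂ): for all matrices u, v, A ∈ M₂(ℂ) with det u = 1 and det v = 1, the evaluation of P at u·A·v equals the evaluation of P at A. Then there exists a single-variable polynomial q over ℂ such that for every A ∈ M₂(ℂ), the evaluation of P at A equals q(det A). -/

import Mathlib

/-!
If `det A ≠ 0`, then `A = u * diag(det A, 1, …, 1)` with `det u = 1`, so left invariance alone
gives `P(A) = q(det A)` for the one-variable polynomial `q(t) = P(diag(t, 1, …, 1))`. Hence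
`det · (P - q(det))` vanishes at every matrix; over an infinite domain it is the zero polynomial,
and since the generic determinant is a nonzero polynomial, `P = q(det)`.
-/

open MvPolynomial Matrix

namespace MvPolynomial

variable {R : Type*} [CommRing R] {n : Type*} [Fintype n] [DecidableEq n]

theorem eval_aeval_det_mvPolynomialX (q : Polynomial R) (A : Matrix n n R) :
    eval (fun p => A p.1 p.2) (Polynomial.aeval (mvPolynomialX n n R).det q) = q.eval A.det := by
  have := Polynomial.aeval_algHom_apply (aeval fun p : n × n => A p.1 p.2)
    (mvPolynomialX n n R).det q
  rw [aeval_eq_eval, eval_det_mvPolynomialX, Polynomial.coe_aeval_eq_eval] at this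
  exact this.symm

theorem eq_of_eval_eq_of_det_ne_zero [IsDomain R] [Infinite R] {P Q : MvPolynomial (n × n) R}
    (h : ∀ A : Matrix n n R, A.det ≠ 0 →
      eval (fun p => A p.1 p.2) P = eval (fun p => A p.1 p.2) Q) : P = Q := by
  have hdet : (mvPolynomialX n n R).det * (P - Q) = 0 := by
    refine funext fun x => ?_
    rw [map_mul, map_sub, map_zero, eval_det_mvPolynomialX, mul_eq_zero, sub_eq_zero]
    exact (em _).imp_right (h (of fun i j => x (i, j)))
  exact sub_eq_zero.1 ((mul_eq_zero.1 hdet).resolve_left (det_mvPolynomialX_ne_zero n R))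

end MvPolynomial

namespace Matrix

variable {n : Type*} [Fintype n] [DecidableEq n]

theorem det_diagonal_mulSingle {R : Type*} [CommRing R] (i : n) (t : R) :
    (diagonal (Pi.mulSingle i t)).det = t := by
  rw [det_diagonal, Fintype.prod_pi_mulSingle']

theorem exists_det_eq_one_eq_mul_diagonal_mulSingle {K : Type*} [Field K]
    {A : Matrix n n K} (hA : A.det ≠ 0) (i : n) :
    ∃ u : Matrix n n K, u.det = 1 ∧ A = u * diagonal (Pi.mulSingle i A.det) := by
  refine ⟨A * (diagonal (Pi.mulSingle i A.det))⁻¹, ?_, ?_⟩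
  · rw [det_mul, det_nonsing_inv, det_diagonal_mulSingle, Ring.inverse_eq_inv',
      mul_inv_cancel₀ hA]
  · rw [nonsing_inv_mul_cancel_right _ _ (by rw [det_diagonal_mulSingle]; exact hA.isUnit)]

end Matrix

namespace MvPolynomial

variable {K : Type*} [Field K] [Infinite K] {n : Type*} [Fintype n] [DecidableEq n] [Nonempty n]

theorem exists_eq_aeval_det_of_eval_mul_eq {P : MvPolynomial (n × n) K}
    (hP : ∀ u A : Matrix n n K, u.det = 1 →
      eval (fun p => (u * A) p.1 p.2) P = eval (fun p => A p.1 p.2) P) :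
    ∃ q : Polynomial K, P = Polynomial.aeval (mvPolynomialX n n K).det q := by
  let i : n := Classical.arbitrary n
  let q : Polynomial K := aeval (fun p => diagonal (Pi.mulSingle i Polynomial.X) p.1 p.2) P
  have eval_q : ∀ t : K, q.eval t = eval (fun p => diagonal (Pi.mulSingle i t) p.1 p.2) P := by
    intro t
    rw [← Polynomial.coe_aeval_eq_eval, ← AlgHom.comp_apply, comp_aeval]
    change aeval _ P = aeval _ P
    congr 2
    funext p
    simp [diagonal_apply, Pi.mulSingle_apply, apply_ite (Polynomial.eval t)]
  refine ⟨q, eq_of_eval_eq_of_det_ne_zero fun A hA => ?_⟩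
  obtain ⟨u, hu, hA⟩ := exists_det_eq_one_eq_mul_diagonal_mulSingle hA i
  conv_lhs => rw [hA]
  rw [hP u _ hu, eval_aeval_det_mvPolynomialX, eval_q]

end MvPolynomial

/-- Every `(SL₂ × SL₂)`-invariant polynomial function on `M₂(ℂ)` is a polynomial in the
determinant: if `P` in the matrix-entry variables satisfies `P(u · A · v) = P(A)` for all
`u, v` of determinant `1`, then there is a one-variable polynomial `q` with
`P(A) = q(det A)` for all `A`. -/
theorem invariant_poly_is_poly_in_det
    (P : MvPolynomial (Fin 2 × Fin 2) ℂ)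
    (hP : ∀ u v A : Matrix (Fin 2) (Fin 2) ℂ, u.det = 1 → v.det = 1 →
      MvPolynomial.eval (fun p => (u * A * v) p.1 p.2) P
        = MvPolynomial.eval (fun p => A p.1 p.2) P) :
    ∃ q : Polynomial ℂ, ∀ A : Matrix (Fin 2) (Fin 2) ℂ,
      MvPolynomial.eval (fun p => A p.1 p.2) P = Polynomial.eval A.det q := by
  obtain ⟨q, rfl⟩ := exists_eq_aeval_det_of_eval_mul_eq fun u A hu => by
    simpa using hP u 1 A hu det_one
  exact ⟨q, eval_aeval_det_mvPolynomialX q⟩
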